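/- Let (X₁,μ₁),…,(Xₙ,μₙ) be σ-finite measure spaces with product (X,μ), let p₁,…,pₙ ∈ (0,∞], and let P be the double n-tuple pairing pⱼ with xⱼ. Let P₁,…,P_m enumerate the orbit {P^σ : σ ∈ Sₙ} of P under permutations of the exponents (variables kept in the fixed order x₁,…,xₙ), where m is the orbit size. Let p̄ = (n⁻¹ Σ_{j=1}^n pⱼ⁻¹)⁻¹ be the harmonic mean of the exponents. Then for any nonnegative measurable functions f₁,…,f_m on X, ‖ ∏_{i=1}^m fᵢ^{1/m} ‖_{L^{p̄}(X)} ≤ ∏_{i=1}^m ‖fᵢ‖_{Pᵢ}^{1/m}. -/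

import Mathlib

open MeasureTheory
open scoped ENNReal

/-- Take the `L^q` norm of `f` in the single variable `x_j`, with the convention that
an exponent `∞` is interpreted as the essential supremum in that variable. -/
noncomputable def normIn {n : ℕ} {X : Fin n → Type*} [∀ j, MeasurableSpace (X j)]
    (μ : ∀ j, Measure (X j)) (j : Fin n) (q : ℝ≥0∞)
    (f : (∀ k, X k) → ℝ≥0∞) : (∀ k, X k) → ℝ≥0∞ :=
  fun x =>
    if q = ∞ then essSup (fun t => f (Function.update x j t)) (μ j)
    else (∫⁻ t, f (Function.update x j t) ^ q.toReal ∂(μ j)) ^ (1 / q.toReal)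

/-- The mixed norm of `f` determined by a double `n`-tuple, given as the list of
(variable, exponent) pairs in the order of processing. -/
noncomputable def mixedNorm {n : ℕ} {X : Fin n → Type*} [∀ j, MeasurableSpace (X j)]
    (μ : ∀ j, Measure (X j)) (P : List (Fin n × ℝ≥0∞))
    (f : (∀ k, X k) → ℝ≥0∞) : ℝ≥0∞ :=
  ⨆ x, (P.foldl (fun g jq => normIn μ jq.1 jq.2 g) f) x

/-- The `L^p` "norm" (for `0 < p ≤ ∞`) of a nonnegative function, the exponent `∞`
being interpreted as the essential supremum. -/
noncomputable def eNorm {α : Type*} [MeasurableSpace α] (μ : Measure α) (p : ℝ≥0∞)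
    (g : α → ℝ≥0∞) : ℝ≥0∞ :=
  if p = ∞ then essSup g μ else (∫⁻ a, g a ^ p.toReal ∂μ) ^ (1 / p.toReal)

/-!
Tonelli's theorem (with an almost-everywhere bound in the case of an infinite exponent)
dominates the `L^{p̄}` norm on the product by the mixed norm with exponent `p̄` in every
variable. That mixed norm is then estimated one variable at a time by Hölder's inequality for
the geometric mean `∏ gᵢ^{1/m}`, with `gᵢ` measured in the exponent that `Pᵢ` assigns to the
current variable. This requires `1/p̄` to be the average of these `m` inverse exponents, which
holds for every variable because the orbit is closed under permuting the exponents: in every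
position each exponent occurs equally often across `P₁, …, P_m`.
-/

open Filter

section eNorm

variable {α : Type*} [MeasurableSpace α] {μ : Measure α} {p q r : ℝ≥0∞} {f g : α → ℝ≥0∞}

lemma eNorm_top : eNorm μ ∞ g = essSup g μ := if_pos rfl

lemma eNorm_of_ne_top (hp : p ≠ ∞) :
    eNorm μ p g = (∫⁻ a, g a ^ p.toReal ∂μ) ^ (1 / p.toReal) := if_neg hp

lemma eNorm_mono_ae (hfg : f ≤ᵐ[μ] g) : eNorm μ p f ≤ eNorm μ p g := by
  rcases eq_or_ne p ∞ with rfl | hp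
  · rw [eNorm_top, eNorm_top]
    exact essSup_mono_ae hfg
  · rw [eNorm_of_ne_top hp, eNorm_of_ne_top hp]
    exact ENNReal.rpow_le_rpow (lintegral_mono_ae (hfg.mono fun a ha => by gcongr)) (by positivity)

lemma eNorm_const_mul (hp : p ≠ 0) (hg : AEMeasurable g μ) (c : ℝ≥0∞) :
    eNorm μ p (fun a => c * g a) = c * eNorm μ p g := by
  rcases eq_or_ne p ∞ with rfl | hp'
  · rw [eNorm_top, eNorm_top]
    exact ENNReal.essSup_const_mul
  · have hp₀ : 0 < p.toReal := ENNReal.toReal_pos hp hp'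
    rw [eNorm_of_ne_top hp', eNorm_of_ne_top hp']
    simp_rw [ENNReal.mul_rpow_of_nonneg _ _ hp₀.le]
    rw [lintegral_const_mul'' _ (hg.pow_const _), ENNReal.mul_rpow_of_nonneg _ _ (by positivity),
      ← ENNReal.rpow_mul, mul_one_div_cancel hp₀.ne', ENNReal.rpow_one]

lemma eNorm_mul_le_top_mul (hq : q ≠ 0) (hg : AEMeasurable g μ) :
    eNorm μ q (fun a => f a * g a) ≤ eNorm μ ∞ f * eNorm μ q g :=
  calc eNorm μ q (fun a => f a * g a) ≤ eNorm μ q (fun a => essSup f μ * g a) :=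
        eNorm_mono_ae <| (ENNReal.ae_le_essSup f).mono fun a ha => mul_le_mul_left ha (g a)
    _ = eNorm μ ∞ f * eNorm μ q g := by rw [eNorm_const_mul hq hg, eNorm_top]

lemma eNorm_mul_le (hp : p ≠ 0) (hq : q ≠ 0) (hpqr : r⁻¹ = p⁻¹ + q⁻¹)
    (hf : AEMeasurable f μ) (hg : AEMeasurable g μ) :
    eNorm μ r (fun a => f a * g a) ≤ eNorm μ p f * eNorm μ q g := by
  rcases eq_or_ne p ∞ with rfl | hp'
  · rw [ENNReal.inv_top, zero_add, inv_inj] at hpqr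
    subst hpqr
    exact eNorm_mul_le_top_mul hq hg
  rcases eq_or_ne q ∞ with rfl | hq'
  · rw [ENNReal.inv_top, add_zero, inv_inj] at hpqr
    subst hpqr
    simp_rw [mul_comm (f _), mul_comm (eNorm μ r f)]
    exact eNorm_mul_le_top_mul hp hf
  have hr' : r ≠ ∞ := by
    rintro rfl
    simp [eq_comm (a := (0 : ℝ≥0∞)), hp'] at hpqr
  have hr : r ≠ 0 := by
    rintro rfl
    simp [eq_comm (a := ∞), ENNReal.add_eq_top, hp, hq] at hpqr
  have hreal : 1 / r.toReal = 1 / p.toReal + 1 / q.toReal := by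
    simp_rw [one_div, ← ENNReal.toReal_inv, hpqr]
    exact ENNReal.toReal_add (ENNReal.inv_ne_top.2 hp) (ENNReal.inv_ne_top.2 hq)
  have hr₀ : 0 < r.toReal := ENNReal.toReal_pos hr hr'
  have hp₀ : 0 < p.toReal := ENNReal.toReal_pos hp hp'
  have hq₀ : 0 < q.toReal := ENNReal.toReal_pos hq hq'
  have hrp : r.toReal < p.toReal := by
    refine lt_of_one_div_lt_one_div hp₀ ?_
    rw [hreal]
    exact lt_add_of_pos_right _ (one_div_pos.2 hq₀)
  simp_rw [eNorm_of_ne_top hr', eNorm_of_ne_top hp', eNorm_of_ne_top hq']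
  exact ENNReal.lintegral_Lp_mul_le_Lq_mul_Lr hr₀ hrp hreal μ hf hg

lemma eNorm_prod_le {ι : Type*} (s : Finset ι) {p : ι → ℝ≥0∞} {g : ι → α → ℝ≥0∞}
    (hp : ∀ i ∈ s, p i ≠ 0) (hg : ∀ i ∈ s, AEMeasurable (g i) μ) :
    eNorm μ (∑ i ∈ s, (p i)⁻¹)⁻¹ (fun a => ∏ i ∈ s, g i a) ≤ ∏ i ∈ s, eNorm μ (p i) (g i) := by
  classical
  induction s using Finset.induction_on with
  | empty =>
    simp only [Finset.sum_empty, ENNReal.inv_zero, Finset.prod_empty, eNorm_top]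
    exact essSup_le_of_ae_le 1 (ae_of_all _ fun _ => le_rfl)
  | insert i s hi ih =>
    simp_rw [Finset.sum_insert hi, Finset.prod_insert hi]
    have hs : (∑ j ∈ s, (p j)⁻¹)⁻¹ ≠ 0 := ENNReal.inv_ne_zero.2 <|
      ENNReal.sum_ne_top.2 fun j hj => ENNReal.inv_ne_top.2 (hp j (Finset.mem_insert_of_mem hj))
    refine (eNorm_mul_le (hp i (Finset.mem_insert_self i s)) hs (by rw [inv_inv, inv_inv])
      (hg i (Finset.mem_insert_self i s))
      (Finset.aemeasurable_fun_prod s fun j hj => hg j (Finset.mem_insert_of_mem hj))).trans ?_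
    gcongr
    exact ih (fun j hj => hp j (Finset.mem_insert_of_mem hj))
      (fun j hj => hg j (Finset.mem_insert_of_mem hj))

lemma eNorm_rpow_one_div {m : ℕ} (hm : m ≠ 0) (q : ℝ≥0∞) (g : α → ℝ≥0∞) :
    eNorm μ (m * q) (fun a => g a ^ ((1 : ℝ) / m)) = eNorm μ q g ^ ((1 : ℝ) / m) := by
  have hm₀ : (0 : ℝ) < m := by positivity
  rcases eq_or_ne q ∞ with rfl | hq
  · rw [ENNReal.mul_top (by exact_mod_cast hm), eNorm_top, eNorm_top]
    exact ((ENNReal.orderIsoRpow ((1 : ℝ) / m) (by positivity)).essSup_apply g μ).symm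
  · rw [eNorm_of_ne_top (ENNReal.mul_ne_top (ENNReal.natCast_ne_top m) hq), eNorm_of_ne_top hq,
      ENNReal.toReal_mul, ENNReal.toReal_natCast]
    simp_rw [← ENNReal.rpow_mul]
    congr 2
    · ext a
      congr 1
      field_simp
    · field_simp

lemma eNorm_geomMean_le {m : ℕ} {q : Fin m → ℝ≥0∞} (hq : ∀ i, q i ≠ 0)
    {h : Fin m → α → ℝ≥0∞} (hh : ∀ i, AEMeasurable (h i) μ) :
    eNorm μ ((m : ℝ≥0∞)⁻¹ * ∑ i, (q i)⁻¹)⁻¹ (fun a => ∏ i, h i a ^ ((1 : ℝ) / m)) ≤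
      ∏ i, eNorm μ (q i) (h i) ^ ((1 : ℝ) / m) := by
  have hm (i : Fin m) : m ≠ 0 := i.pos.ne'
  have hexp : (m : ℝ≥0∞)⁻¹ * ∑ i, (q i)⁻¹ = ∑ i, ((m : ℝ≥0∞) * q i)⁻¹ := by
    rw [Finset.mul_sum]
    refine Finset.sum_congr rfl fun i _ => ?_
    rw [ENNReal.mul_inv (.inl (by exact_mod_cast hm i)) (.inl (ENNReal.natCast_ne_top m))]
  rw [hexp]
  calc _ ≤ ∏ i, eNorm μ (m * q i) (fun a => h i a ^ ((1 : ℝ) / m)) :=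
        eNorm_prod_le _ (fun i _ => mul_ne_zero (by exact_mod_cast hm i) (hq i))
          (fun i _ => (hh i).pow_const _)
    _ = ∏ i, eNorm μ (q i) (h i) ^ ((1 : ℝ) / m) :=
        Finset.prod_congr rfl fun i _ => eNorm_rpow_one_div (hm i) _ _

end eNorm

lemma Measurable.essSup_prod_right' {β γ : Type*} [MeasurableSpace β] [MeasurableSpace γ]
    {ν : Measure γ} [SFinite ν] {F : β × γ → ℝ≥0∞} (hF : Measurable F) :
    Measurable fun b => essSup (fun c => F (b, c)) ν := by
  refine measurable_of_Ioi fun t => ?_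
  have hpre : (fun b => essSup (fun c => F (b, c)) ν) ⁻¹' Set.Ioi t =
      (fun b => ν (Prod.mk b ⁻¹' {z | t < F z})) ⁻¹' Set.Ioi 0 := by
    ext b
    simp only [Set.mem_preimage, Set.mem_Ioi]
    rw [← not_le, ← not_le, nonpos_iff_eq_zero]
    refine not_congr ⟨fun h => measure_mono_null (fun c (hc : t < F (b, c)) => h.trans_lt hc)
      (meas_essSup_lt (f := fun c => F (b, c))), fun h => essSup_le_of_ae_le t ?_⟩
    rw [EventuallyLE, ae_iff]
    simp only [not_le]
    exact h
  rw [hpre]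
  exact measurable_measure_prodMk_left (measurableSet_lt measurable_const hF) measurableSet_Ioi

section normIn

variable {n : ℕ} {X : Fin n → Type*} [∀ j, MeasurableSpace (X j)] (μ : ∀ j, Measure (X j))

lemma normIn_apply (j : Fin n) (q : ℝ≥0∞) (f : (∀ k, X k) → ℝ≥0∞) (x : ∀ k, X k) :
    normIn μ j q f x = eNorm (μ j) q (fun t => f (Function.update x j t)) := rfl

lemma normIn_mono (j : Fin n) (q : ℝ≥0∞) {f g : (∀ k, X k) → ℝ≥0∞} (hfg : f ≤ g) :
    normIn μ j q f ≤ normIn μ j q g := fun _ =>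
  eNorm_mono_ae (ae_of_all _ fun _ => hfg _)

variable [∀ j, SigmaFinite (μ j)]

lemma measurable_normIn (j : Fin n) (q : ℝ≥0∞) {f : (∀ k, X k) → ℝ≥0∞} (hf : Measurable f) :
    Measurable (normIn μ j q f) := by
  have hF : Measurable fun z : (∀ k, X k) × X j => f (Function.update z.1 j z.2) :=
    hf.comp measurable_update'
  change Measurable fun x => eNorm (μ j) q fun t => f (Function.update x j t)
  rcases eq_or_ne q ∞ with rfl | hq
  · simp_rw [eNorm_top]
    exact hF.essSup_prod_right'
  · simp_rw [eNorm_of_ne_top hq]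
    exact ((hF.pow_const _).lintegral_prod_right').pow_const _

lemma measurable_foldl_normIn (P : List (Fin n × ℝ≥0∞)) {f : (∀ k, X k) → ℝ≥0∞}
    (hf : Measurable f) : Measurable (P.foldl (fun g jq => normIn μ jq.1 jq.2 g) f) := by
  induction P generalizing f with
  | nil => exact hf
  | cons jq P ih => exact ih (measurable_normIn μ jq.1 jq.2 hf)

end normIn

section partialMixedNorm

variable {n : ℕ} {X : Fin n → Type*} [∀ j, MeasurableSpace (X j)] (μ : ∀ j, Measure (X j))

noncomputable def partialMixedNorm (E : Fin n → ℝ≥0∞) (k : ℕ) (f : (∀ k, X k) → ℝ≥0∞) :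
    (∀ k, X k) → ℝ≥0∞ :=
  ((List.ofFn fun j => (j, E j)).take k).foldl (fun g jq => normIn μ jq.1 jq.2 g) f

variable (E : Fin n → ℝ≥0∞)

@[simp]
lemma partialMixedNorm_zero (f : (∀ k, X k) → ℝ≥0∞) : partialMixedNorm μ E 0 f = f := rfl

lemma partialMixedNorm_succ {k : ℕ} (hk : k < n) (f : (∀ k, X k) → ℝ≥0∞) :
    partialMixedNorm μ E (k + 1) f = normIn μ ⟨k, hk⟩ (E ⟨k, hk⟩) (partialMixedNorm μ E k f) := by
  rw [partialMixedNorm, List.take_add_one, List.foldl_append]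
  simp [hk, partialMixedNorm]

lemma mixedNorm_eq_iSup_partialMixedNorm (f : (∀ k, X k) → ℝ≥0∞) :
    mixedNorm μ (List.ofFn fun j => (j, E j)) f = ⨆ x, partialMixedNorm μ E n f x := by
  rw [partialMixedNorm, List.take_of_length_le (by simp), mixedNorm]

lemma measurable_partialMixedNorm [∀ j, SigmaFinite (μ j)] (k : ℕ) {f : (∀ k, X k) → ℝ≥0∞}
    (hf : Measurable f) : Measurable (partialMixedNorm μ E k f) :=
  measurable_foldl_normIn μ _ hf

end partialMixedNorm

section Tonelli

variable {n : ℕ} {X : Fin n → Type*} [∀ j, MeasurableSpace (X j)] (μ : ∀ j, Measure (X j))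
  [∀ j, SigmaFinite (μ j)]

lemma ae_pi_of_forall_ae_update (j : Fin n) {s : Set (∀ k, X k)} (hs : MeasurableSet s)
    (h : ∀ x, ∀ᵐ t ∂μ j, Function.update x j t ∈ s) : ∀ᵐ x ∂Measure.pi μ, x ∈ s := by
  classical
  -- `lintegral_eq_lmarginal_univ` needs a base point, which `sᶜ` supplies unless it is empty
  rcases sᶜ.eq_empty_or_nonempty with hempty | ⟨x₀, -⟩
  · exact ae_of_all _ fun x => by simpa using Set.ext_iff.1 hempty x
  have hslice (x : ∀ k, X k) : ∫⁻ t, sᶜ.indicator 1 (Function.update x j t) ∂μ j = 0 :=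
    lintegral_eq_zero_of_ae_eq_zero <| (h x).mono fun t ht => by simp [ht]
  rw [ae_iff, ← Set.compl_def, ← lintegral_indicator_one hs.compl, lintegral_eq_lmarginal_univ x₀,
    lmarginal_erase' _ (measurable_one.indicator hs.compl) (Finset.mem_univ j)]
  simp [hslice, lmarginal]

lemma ae_le_normIn_top (j : Fin n) {g : (∀ k, X k) → ℝ≥0∞} (hg : Measurable g) :
    ∀ᵐ x ∂Measure.pi μ, g x ≤ normIn μ j ∞ g x :=
  ae_pi_of_forall_ae_update μ j (s := {x | g x ≤ normIn μ j ∞ g x})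
    (measurableSet_le hg (measurable_normIn μ j ∞ hg)) fun x =>
    (ENNReal.ae_le_essSup fun t => g (Function.update x j t)).mono fun t ht => by
      simpa [normIn_apply, eNorm_top] using ht

lemma ae_le_partialMixedNorm_top {g : (∀ k, X k) → ℝ≥0∞} (hg : Measurable g) {k : ℕ}
    (hk : k ≤ n) : ∀ᵐ x ∂Measure.pi μ, g x ≤ partialMixedNorm μ (fun _ => ∞) k g x := by
  induction k with
  | zero => exact ae_of_all _ fun x => le_rfl
  | succ k ih =>
    filter_upwards [ih (by omega), ae_le_normIn_top μ ⟨k, hk⟩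
      (measurable_partialMixedNorm μ _ k hg)] with x h₁ h₂
    rw [partialMixedNorm_succ μ _ hk]
    exact h₁.trans h₂

lemma partialMixedNorm_eq_lmarginal {q : ℝ≥0∞} (hq₀ : q ≠ 0) (hq : q ≠ ∞)
    {g : (∀ k, X k) → ℝ≥0∞} (hg : Measurable g) {k : ℕ} (hk : k ≤ n) (x : ∀ k, X k) :
    partialMixedNorm μ (fun _ => q) k g x =
      (∫⋯∫⁻_(Finset.univ.filter fun j : Fin n => (j : ℕ) < k), fun y => g y ^ q.toReal ∂μ) x ^
        (1 / q.toReal) := by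
  have hq' : 0 < q.toReal := ENNReal.toReal_pos hq₀ hq
  induction k generalizing x with
  | zero =>
    simp [← ENNReal.rpow_mul, mul_inv_cancel₀ hq'.ne']
  | succ k ih =>
    have hins : (Finset.univ.filter fun j : Fin n => (j : ℕ) < k + 1) =
        insert ⟨k, hk⟩ (Finset.univ.filter fun j : Fin n => (j : ℕ) < k) := by
      ext j
      simp [Fin.ext_iff]
      omega
    rw [partialMixedNorm_succ μ _ hk, normIn_apply, eNorm_of_ne_top hq, hins,
      lmarginal_insert _ (hg.pow_const _) (by simp)]
    simp_rw [ih (by omega), ← ENNReal.rpow_mul, one_div_mul_cancel hq'.ne', ENNReal.rpow_one]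

lemma eNorm_pi_le_mixedNorm {q : ℝ≥0∞} (hq₀ : q ≠ 0) {g : (∀ k, X k) → ℝ≥0∞}
    (hg : Measurable g) :
    eNorm (Measure.pi μ) q g ≤ mixedNorm μ (List.ofFn fun j => (j, q)) g := by
  rw [mixedNorm_eq_iSup_partialMixedNorm]
  rcases eq_or_ne q ∞ with rfl | hq
  · rw [eNorm_top]
    exact essSup_le_of_ae_le _ <| (ae_le_partialMixedNorm_top μ hg le_rfl).mono fun x hx =>
      hx.trans (le_iSup (partialMixedNorm μ (fun _ => ∞) n g) x)
  · rcases isEmpty_or_nonempty (∀ k, X k) with hX | ⟨⟨x₀⟩⟩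
    · simp [eNorm_of_ne_top hq, Measure.eq_zero_of_isEmpty, ENNReal.toReal_pos hq₀ hq]
    have huniv : (Finset.univ.filter fun j : Fin n => (j : ℕ) < n) = Finset.univ := by
      ext j
      simp
    refine le_of_eq_of_le ?_ (le_iSup _ x₀)
    rw [eNorm_of_ne_top hq, partialMixedNorm_eq_lmarginal μ hq₀ hq hg le_rfl, huniv,
      lintegral_eq_lmarginal_univ x₀]

end Tonelli

section Orbit

variable {n m : ℕ} {β : Type*} {p : Fin n → β} {e : Fin m → Equiv.Perm (Fin n)}

lemma exists_bijective_reindex_comp_perm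
    (henum : ∀ σ : Equiv.Perm (Fin n), ∃! i : Fin m, (fun j => p (e i j)) = (fun j => p (σ j)))
    (τ : Equiv.Perm (Fin n)) :
    ∃ φ : Fin m → Fin m, φ.Bijective ∧ ∀ i j, p (e (φ i) j) = p (e i (τ j)) := by
  choose φ hφ _ using fun i => henum (τ.trans (e i))
  refine ⟨φ, Finite.injective_iff_bijective.1 fun i₁ i₂ h => ?_, fun i j => congrFun (hφ i) j⟩
  have h₁₂ : (fun j => p (e i₂ j)) = fun j => p (e i₁ j) := funext fun j => by
    have h₁ := congrFun (hφ i₁) (τ.symm j)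
    have h₂ := congrFun (hφ i₂) (τ.symm j)
    simp only [Equiv.trans_apply, Equiv.apply_symm_apply] at h₁ h₂
    rw [← h₁, ← h₂, h]
  exact (henum (e i₁)).unique rfl h₁₂

variable {M : Type*} [AddCommMonoid M]

lemma sum_comp_apply_eq_of_enum
    (henum : ∀ σ : Equiv.Perm (Fin n), ∃! i : Fin m, (fun j => p (e i j)) = (fun j => p (σ j)))
    (G : β → M) (j j' : Fin n) : ∑ i, G (p (e i j)) = ∑ i, G (p (e i j')) := by
  obtain ⟨φ, hφ, hpφ⟩ := exists_bijective_reindex_comp_perm henum (Equiv.swap j j')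
  calc ∑ i, G (p (e i j)) = ∑ i, G (p (e (φ i) j')) := by
        simp_rw [hpφ, Equiv.swap_apply_right]
    _ = ∑ i, G (p (e i j')) := Fintype.sum_bijective φ hφ _ _ fun _ => rfl

/-- Double counting in the matrix `G (p (e i j))`: its rows are rearrangements of `p`, and its
columns have equal sums. -/
lemma card_nsmul_sum_comp_apply_eq_of_enum
    (henum : ∀ σ : Equiv.Perm (Fin n), ∃! i : Fin m, (fun j => p (e i j)) = (fun j => p (σ j)))
    (G : β → M) (j : Fin n) : n • ∑ i, G (p (e i j)) = m • ∑ j', G (p j') :=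
  calc n • ∑ i, G (p (e i j)) = ∑ j' : Fin n, ∑ i, G (p (e i j')) := by
        rw [Finset.sum_congr rfl fun j' _ => (sum_comp_apply_eq_of_enum henum G j j').symm,
          Finset.sum_const, Finset.card_fin]
    _ = ∑ i : Fin m, ∑ j', G (p j') := by
        rw [Finset.sum_comm]
        exact Finset.sum_congr rfl fun i _ => Equiv.sum_comp (e i) fun j' => G (p j')
    _ = m • ∑ j', G (p j') := by rw [Finset.sum_const, Finset.card_fin]

lemma harmonicMean_inv_eq_of_enum {p : Fin n → ℝ≥0∞}
    (henum : ∀ σ : Equiv.Perm (Fin n), ∃! i : Fin m, (fun j => p (e i j)) = (fun j => p (σ j)))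
    (j : Fin n) : (n : ℝ≥0∞)⁻¹ * ∑ j', (p j')⁻¹ = (m : ℝ≥0∞)⁻¹ * ∑ i, (p (e i j))⁻¹ := by
  have hn : (n : ℝ≥0∞) ≠ 0 := Nat.cast_ne_zero.2 j.pos.ne'
  have hm : (m : ℝ≥0∞) ≠ 0 := Nat.cast_ne_zero.2 (henum 1).exists.choose.pos.ne'
  have h := card_nsmul_sum_comp_apply_eq_of_enum henum (fun x : ℝ≥0∞ => x⁻¹) j
  simp only [nsmul_eq_mul] at h
  rw [← ENNReal.div_eq_inv_mul, ← ENNReal.div_eq_inv_mul,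
    ENNReal.div_eq_div_iff hm (ENNReal.natCast_ne_top m) hn (ENNReal.natCast_ne_top n), h]

end Orbit

section GeomMean

variable {n : ℕ} {X : Fin n → Type*} [∀ j, MeasurableSpace (X j)] (μ : ∀ j, Measure (X j))
  [∀ j, SigmaFinite (μ j)] {m : ℕ} {E : Fin m → Fin n → ℝ≥0∞} {q : ℝ≥0∞}
  {f : Fin m → (∀ k, X k) → ℝ≥0∞}

lemma partialMixedNorm_geomMean_le (hE : ∀ i j, E i j ≠ 0)
    (hq : ∀ j, q⁻¹ = (m : ℝ≥0∞)⁻¹ * ∑ i, (E i j)⁻¹) (hf : ∀ i, Measurable (f i)) {k : ℕ}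
    (hk : k ≤ n) (x : ∀ k, X k) :
    partialMixedNorm μ (fun _ => q) k (fun y => ∏ i, f i y ^ ((1 : ℝ) / m)) x ≤
      ∏ i, partialMixedNorm μ (E i) k (f i) x ^ ((1 : ℝ) / m) := by
  induction k generalizing x with
  | zero => exact le_rfl
  | succ k ih =>
    set jk : Fin n := ⟨k, hk⟩
    simp_rw [partialMixedNorm_succ μ _ hk]
    calc normIn μ jk q (partialMixedNorm μ (fun _ => q) k fun y => ∏ i, f i y ^ ((1 : ℝ) / m)) x
        ≤ normIn μ jk q (fun y => ∏ i, partialMixedNorm μ (E i) k (f i) y ^ ((1 : ℝ) / m)) x :=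
          normIn_mono μ jk q (ih (by omega)) x
      _ ≤ ∏ i, normIn μ jk (E i jk) (partialMixedNorm μ (E i) k (f i)) x ^ ((1 : ℝ) / m) := by
          rw [normIn_apply, ← inv_inv q, hq jk]
          exact eNorm_geomMean_le (fun i => hE i jk) fun i =>
            ((measurable_partialMixedNorm μ _ k (hf i)).comp (measurable_update x)).aemeasurable

lemma mixedNorm_geomMean_le (hE : ∀ i j, E i j ≠ 0)
    (hq : ∀ j, q⁻¹ = (m : ℝ≥0∞)⁻¹ * ∑ i, (E i j)⁻¹) (hf : ∀ i, Measurable (f i)) :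
    mixedNorm μ (List.ofFn fun j => (j, q)) (fun y => ∏ i, f i y ^ ((1 : ℝ) / m)) ≤
      ∏ i, mixedNorm μ (List.ofFn fun j => (j, E i j)) (f i) ^ ((1 : ℝ) / m) := by
  simp_rw [mixedNorm_eq_iSup_partialMixedNorm]
  refine iSup_le fun x => (partialMixedNorm_geomMean_le μ hE hq hf le_rfl x).trans ?_
  gcongr
  exact le_iSup (partialMixedNorm μ (E _) n (f _)) x

end GeomMean

/-- Symmetric geometric-mean Hölder estimate: if `P₁, …, P_m` (given by permutations
`e 1, …, e m` of the exponents, the variables staying in their fixed order) enumerate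
the orbit `{P^σ : σ ∈ Sₙ}` of `P`, then for the harmonic mean `p̄` of the exponents,
`‖∏ fᵢ^{1/m}‖_{L^{p̄}} ≤ ∏ ‖fᵢ‖_{Pᵢ}^{1/m}`. -/
theorem symmetric_holder {n m : ℕ} {X : Fin n → Type*}
    [∀ j, MeasurableSpace (X j)] (μ : ∀ j, Measure (X j)) [∀ j, SigmaFinite (μ j)]
    (p : Fin n → ℝ≥0∞) (hp : ∀ j, 0 < p j)
    (e : Fin m → Equiv.Perm (Fin n))
    (henum : ∀ σ : Equiv.Perm (Fin n),
      ∃! i : Fin m, (fun j => p (e i j)) = (fun j => p (σ j)))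
    (f : Fin m → (∀ k, X k) → ℝ≥0∞) (hf : ∀ i, Measurable (f i)) :
    eNorm (Measure.pi μ) ((↑n)⁻¹ * ∑ j : Fin n, (p j)⁻¹)⁻¹
        (fun x => ∏ i : Fin m, f i x ^ ((1 : ℝ) / m)) ≤
      ∏ i : Fin m,
        mixedNorm μ (List.ofFn fun j => (j, p (e i j))) (f i) ^ ((1 : ℝ) / m) := by
  have hmean_ne_top : (n : ℝ≥0∞)⁻¹ * ∑ j, (p j)⁻¹ ≠ ∞ := by
    rcases Nat.eq_zero_or_pos n with rfl | hn
    · simp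
    · exact ENNReal.mul_ne_top (ENNReal.inv_ne_top.2 (by exact_mod_cast hn.ne'))
        (ENNReal.sum_ne_top.2 fun j _ => ENNReal.inv_ne_top.2 (hp j).ne')
  have hcolumn (j : Fin n) : ((n : ℝ≥0∞)⁻¹ * ∑ j, (p j)⁻¹)⁻¹⁻¹ =
      (m : ℝ≥0∞)⁻¹ * ∑ i, (p (e i j))⁻¹ := by
    rw [inv_inv, harmonicMean_inv_eq_of_enum henum j]
  exact (eNorm_pi_le_mixedNorm μ (ENNReal.inv_ne_zero.2 hmean_ne_top)
    (Finset.measurable_prod _ fun i _ => (hf i).pow_const _)).trans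
      (mixedNorm_geomMean_le μ (fun i j => (hp _).ne') hcolumn hf)
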